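/- Suppose two iteratively-defined projection maps Ψ and Ω on fermionic multiline queues (built by composing row operators Ψ^{(j)}_{Q_j} and Ω^{(j)}_{Q_j} from top row down) satisfy: (i) Ψ(Q) = Ω(Q) for all straight (partition-shape) multiline queues Q; (ii) both are invariant under every row-swap σ_i; (iii) incrementing compatibility Ψ^{(j+1)}_Q(u^{(+1)}) = (Ψ^{(j)}_Q(u))^{(+1)} and similarly for Ω. Then Ψ(Q) = Ω(Q) for all (possibly twisted) multiline queues Q, and moreover all intermediate partial compositions agree: Ψ^{(j)}_{Q_j}(⋯Ψ^{(k)}_{Q_k}(u_k)⋯) = Ω^{(j)}_{Q_j}(⋯Ω^{(k)}_{Q_k}(v_k)⋯) for all 1 ≤ j ≤ k. -/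

import Mathlib

/-- Linear bracket-matching pass.  Tokens are `(site, isOpen)`.  The second argument is the
stack of currently unmatched open brackets (most recent first), the third accumulates the
linearly unmatched closed brackets (most recent first). -/
def pairProcess {α : Type} : List (α × Bool) → List α → List α → List α × List α
  | [], opens, closes => (opens, closes)
  | (a, true) :: ts, opens, closes => pairProcess ts (a :: opens) closes
  | (a, false) :: ts, [], closes => pairProcess ts [] (a :: closes)
  | (_, false) :: ts, _ :: opens, closes => pairProcess ts opens closes

/-- The token list of `Par(A,B)`: scanning sites `j = 1, …, n` in order, record an open
bracket for `j ∈ B` (the row above) and then a closed bracket for `j ∈ A` (the row below). -/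
def parTokens {n : ℕ} (A B : Finset (Fin n)) : List (Fin n × Bool) :=
  (List.finRange n).flatMap
    (fun j => (if j ∈ B then [(j, true)] else []) ++ (if j ∈ A then [(j, false)] else []))

/-- Result of the linear pass on `Par(A,B)`. -/
def parRes {n : ℕ} (A B : Finset (Fin n)) : List (Fin n) × List (Fin n) :=
  pairProcess (parTokens A B) [] []

/-- The set of cylindrically unpaired particles of `B` (open brackets) in `Par(A,B)`:
after the linear pass, the cyclic rule additionally matches `min` many remaining opens
and closes, leaving the earliest surplus opens unmatched. -/
def unmatchedOpen {n : ℕ} (A B : Finset (Fin n)) : Finset (Fin n) :=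
  ((parRes A B).1.drop (parRes A B).2.length).toFinset

/-- The set of cylindrically unpaired particles of `A` (closed brackets) in `Par(A,B)`. -/
def unmatchedClose {n : ℕ} (A B : Finset (Fin n)) : Finset (Fin n) :=
  ((parRes A B).2.take ((parRes A B).2.length - (parRes A B).1.length)).toFinset

/-- The row-swapping involution on a pair of rows `(A, B)` (`A` below, `B` above):
all cylindrically unmatched entries of `Par(A,B)` are exchanged between the two rows. -/
def sigmaPair {n : ℕ} (A B : Finset (Fin n)) : Finset (Fin n) × Finset (Fin n) :=
  ((A \ unmatchedClose A B) ∪ unmatchedOpen A B,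
   (B \ unmatchedOpen A B) ∪ unmatchedClose A B)

/-- The involution `σ_i` acting on rows `i` and `i+1` of a multiline queue. -/
def sigmaRow {n : ℕ} (i : ℕ) (Q : ℕ → Finset (Fin n)) : ℕ → Finset (Fin n) :=
  fun j =>
    if j = i then (sigmaPair (Q i) (Q (i + 1))).1
    else if j = i + 1 then (sigmaPair (Q i) (Q (i + 1))).2
    else Q j

/-- `u^{(+1)}`: increment every nonzero entry by one. -/
def incWord {n : ℕ} (u : Fin n → ℕ) : Fin n → ℕ :=
  fun j => if u j = 0 then 0 else u j + 1

/-- `applyRows P Q k base m` applies the row operators of `P` for rows `k, k-1, …, k-m+1`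
(rows are 1-indexed): `applyRows … 0 = base` and
`applyRows … (m+1) = P^{(k-m)}_{Q (k-m)} (applyRows … m)`.  In particular
`applyRows P Q k base (k - j + 1) = P^{(j)}_{Q_j}(⋯ P^{(k)}_{Q_k}(base) ⋯)`. -/
def applyRows {n : ℕ} (P : ℕ → Finset (Fin n) → (Fin n → ℕ) → (Fin n → ℕ))
    (Q : ℕ → Finset (Fin n)) (k : ℕ) (base : Fin n → ℕ) : ℕ → (Fin n → ℕ)
  | 0 => base
  | m + 1 => P (k - m) (Q (k - m)) (applyRows P Q k base m)

/-! Each `σ_i` exchanges the sizes of rows `i` and `i + 1`, because the unmatched particles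
of the two rows differ in number by exactly the difference of the row sizes. So if some row
is shorter than the row above it, swapping the two strictly decreases the weight
`∑ j * |Q_j|` while, by (ii), changing neither projection; induction on the weight reduces
every multiline queue to a straight one, where (i) applies. The partial composition from
row `j` on is the full projection of the queue of rows `j, …, k`, incremented `j - 1` times,
so by (iii) it reduces to the full case. -/

open scoped List

section Brackets

variable {α : Type}

def openSites (ts : List (α × Bool)) : List α := (ts.filter (·.2)).map Prod.fst

def closeSites (ts : List (α × Bool)) : List α := (ts.filter (!·.2)).map Prod.fst

theorem pairProcess_append (ts₁ ts₂ : List (α × Bool)) (o c : List α) :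
    pairProcess (ts₁ ++ ts₂) o c
      = pairProcess ts₂ (pairProcess ts₁ o c).1 (pairProcess ts₁ o c).2 := by
  induction ts₁ generalizing o c with
  | nil => rfl
  | cons t ts ih =>
    obtain ⟨a, _ | _⟩ := t
    · cases o <;> exact ih ..
    · exact ih ..

theorem pairProcess_flatMap_congr {β : Type} {f g : β → List (α × Bool)}
    (h : ∀ b o c, pairProcess (f b) o c = pairProcess (g b) o c) (l : List β) (o c : List α) :
    pairProcess (l.flatMap f) o c = pairProcess (l.flatMap g) o c := by
  induction l generalizing o c with
  | nil => rfl
  | cons b l ih => simp only [List.flatMap_cons, pairProcess_append, h, ih]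

theorem pairProcess_fst_sublist (ts : List (α × Bool)) (o c : List α) :
    (pairProcess ts o c).1 <+ (openSites ts).reverse ++ o := by
  induction ts generalizing o c with
  | nil => exact List.Sublist.refl _
  | cons t ts ih =>
    obtain ⟨a, _ | _⟩ := t
    · cases o with
      | nil => simpa [pairProcess, openSites] using ih [] (a :: c)
      | cons x o =>
        simpa [pairProcess, openSites] using
          (ih o c).trans ((List.sublist_cons_self x o).append_left _)
    · simpa [pairProcess, openSites] using ih (a :: o) c

theorem pairProcess_snd_sublist (ts : List (α × Bool)) (o c : List α) :
    (pairProcess ts o c).2 <+ (closeSites ts).reverse ++ c := by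
  induction ts generalizing o c with
  | nil => exact List.Sublist.refl _
  | cons t ts ih =>
    obtain ⟨a, _ | _⟩ := t
    · cases o with
      | nil => simpa [pairProcess, closeSites] using ih [] (a :: c)
      | cons x o =>
        simpa [pairProcess, closeSites] using
          (ih o c).trans ((List.sublist_cons_self a c).append_left _)
    · simpa [pairProcess, closeSites] using ih (a :: o) c

theorem pairProcess_length (ts : List (α × Bool)) (o c : List α) :
    (pairProcess ts o c).1.length + (closeSites ts).length + c.length
      = (pairProcess ts o c).2.length + (openSites ts).length + o.length := by
  induction ts generalizing o c with
  | nil => simp [pairProcess, openSites, closeSites]; omega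
  | cons t ts ih =>
    obtain ⟨a, _ | _⟩ := t
    · cases o with
      | nil => have := ih [] (a :: c); simp [pairProcess, openSites, closeSites] at this ⊢; omega
      | cons x o => have := ih o c; simp [pairProcess, openSites, closeSites] at this ⊢; omega
    · have := ih (a :: o) c; simp [pairProcess, openSites, closeSites] at this ⊢; omega

end Brackets

section ParTokens

variable {n : ℕ}

theorem openSites_parTokens (A B : Finset (Fin n)) :
    openSites (parTokens A B) = (List.finRange n).filter (· ∈ B) := by
  unfold openSites parTokens
  induction List.finRange n with
  | nil => rfl
  | cons j l ih => by_cases hA : j ∈ A <;> by_cases hB : j ∈ B <;> simp_all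

theorem closeSites_parTokens (A B : Finset (Fin n)) :
    closeSites (parTokens A B) = (List.finRange n).filter (· ∈ A) := by
  unfold closeSites parTokens
  induction List.finRange n with
  | nil => rfl
  | cons j l ih => by_cases hA : j ∈ A <;> by_cases hB : j ∈ B <;> simp_all

-- A site in both rows gives an open bracket immediately followed by a close; they cancel.
theorem parRes_sdiff (A B : Finset (Fin n)) : parRes A B = parRes (A \ B) (B \ A) := by
  refine pairProcess_flatMap_congr (fun j o c => ?_) _ _ _
  by_cases hA : j ∈ A <;> by_cases hB : j ∈ B <;> simp [pairProcess, hA, hB]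

theorem length_filter_finRange_mem (s : Finset (Fin n)) :
    ((List.finRange n).filter (· ∈ s)).length = s.card := by
  rw [← List.toFinset_card_of_nodup ((List.nodup_finRange n).filter _)]
  congr
  ext x
  simp

theorem parRes_fst_sublist (A B : Finset (Fin n)) :
    (parRes A B).1 <+ ((List.finRange n).filter (· ∈ B \ A)).reverse := by
  rw [parRes_sdiff, ← openSites_parTokens (A \ B)]
  simpa only [parRes, List.append_nil] using pairProcess_fst_sublist _ [] []

theorem parRes_snd_sublist (A B : Finset (Fin n)) :
    (parRes A B).2 <+ ((List.finRange n).filter (· ∈ A \ B)).reverse := by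
  rw [parRes_sdiff, ← closeSites_parTokens (A \ B) (B \ A)]
  simpa only [parRes, List.append_nil] using pairProcess_snd_sublist _ [] []

theorem parRes_length (A B : Finset (Fin n)) :
    (parRes A B).1.length + (A \ B).card = (parRes A B).2.length + (B \ A).card := by
  rw [parRes_sdiff]
  have := pairProcess_length (parTokens (A \ B) (B \ A)) [] []
  rwa [openSites_parTokens, closeSites_parTokens, length_filter_finRange_mem,
    length_filter_finRange_mem] at this

theorem unmatchedOpen_subset (A B : Finset (Fin n)) : unmatchedOpen A B ⊆ B \ A := by
  intro x hx
  simpa using (parRes_fst_sublist A B).subset (List.mem_of_mem_drop (List.mem_toFinset.mp hx))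

theorem unmatchedClose_subset (A B : Finset (Fin n)) : unmatchedClose A B ⊆ A \ B := by
  intro x hx
  simpa using (parRes_snd_sublist A B).subset (List.mem_of_mem_take (List.mem_toFinset.mp hx))

theorem card_unmatchedOpen_add_card (A B : Finset (Fin n)) :
    (unmatchedOpen A B).card + A.card = (unmatchedClose A B).card + B.card := by
  have hsites (s : Finset (Fin n)) : ((List.finRange n).filter (· ∈ s)).reverse.Nodup :=
    List.nodup_reverse.mpr ((List.nodup_finRange n).filter _)
  have hopen := (parRes_fst_sublist A B).nodup (hsites _)
  have hclose := (parRes_snd_sublist A B).nodup (hsites _)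
  rw [unmatchedOpen, unmatchedClose,
    List.toFinset_card_of_nodup (hopen.sublist (List.drop_sublist _ _)),
    List.toFinset_card_of_nodup (hclose.sublist (List.take_sublist _ _)), List.length_drop,
    List.length_take, ← Finset.card_sdiff_add_card_inter A B,
    ← Finset.card_sdiff_add_card_inter B A, Finset.inter_comm B A]
  have := parRes_length A B
  omega

theorem card_sigmaPair_fst (A B : Finset (Fin n)) : (sigmaPair A B).1.card = B.card := by
  have hdisj : Disjoint (A \ unmatchedClose A B) (unmatchedOpen A B) :=
    Finset.disjoint_of_subset_right (unmatchedOpen_subset A B)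
      (Finset.disjoint_sdiff.mono_left Finset.sdiff_subset)
  have hsub : unmatchedClose A B ⊆ A := (unmatchedClose_subset A B).trans Finset.sdiff_subset
  have hle := Finset.card_le_card hsub
  rw [sigmaPair, Finset.card_union_of_disjoint hdisj, Finset.card_sdiff_of_subset hsub]
  have := card_unmatchedOpen_add_card A B
  omega

theorem card_sigmaPair_snd (A B : Finset (Fin n)) : (sigmaPair A B).2.card = A.card := by
  have hdisj : Disjoint (B \ unmatchedOpen A B) (unmatchedClose A B) :=
    Finset.disjoint_of_subset_right (unmatchedClose_subset A B)
      (Finset.disjoint_sdiff.mono_left Finset.sdiff_subset)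
  have hsub : unmatchedOpen A B ⊆ B := (unmatchedOpen_subset A B).trans Finset.sdiff_subset
  have hle := Finset.card_le_card hsub
  rw [sigmaPair, Finset.card_union_of_disjoint hdisj, Finset.card_sdiff_of_subset hsub]
  have := card_unmatchedOpen_add_card A B
  omega

end ParTokens

section Straightening

variable {n : ℕ}

def rowWeight (k : ℕ) (Q : ℕ → Finset (Fin n)) : ℕ := ∑ j ∈ Finset.Icc 1 k, j * (Q j).card

theorem rowWeight_sigmaRow {k i : ℕ} (Q : ℕ → Finset (Fin n)) (hi : 1 ≤ i) (hik : i + 1 ≤ k) :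
    rowWeight k (sigmaRow i Q) + (Q (i + 1)).card = rowWeight k Q + (Q i).card := by
  have hsub : ({i, i + 1} : Finset ℕ) ⊆ Finset.Icc 1 k := by
    intro x hx
    simp only [Finset.mem_insert, Finset.mem_singleton] at hx
    rcases hx with rfl | rfl <;> simp only [Finset.mem_Icc] <;> omega
  have hne : i ≠ i + 1 := by omega
  have hrest : ∑ j ∈ Finset.Icc 1 k \ {i, i + 1}, j * (sigmaRow i Q j).card
      = ∑ j ∈ Finset.Icc 1 k \ {i, i + 1}, j * (Q j).card := by
    refine Finset.sum_congr rfl fun j hj => ?_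
    simp only [Finset.mem_sdiff, Finset.mem_insert, Finset.mem_singleton, not_or] at hj
    simp [sigmaRow, hj.2.1, hj.2.2]
  rw [rowWeight, rowWeight, ← Finset.sum_sdiff hsub, ← Finset.sum_sdiff hsub, hrest,
    Finset.sum_pair hne, Finset.sum_pair hne]
  have hi' : (sigmaRow i Q i).card = (Q (i + 1)).card := by simp [sigmaRow, card_sigmaPair_fst]
  have hi1' : (sigmaRow i Q (i + 1)).card = (Q i).card := by
    simp [sigmaRow, card_sigmaPair_snd]
  rw [hi', hi1']
  ring

theorem sigmaRow_induction {k : ℕ} {p : (ℕ → Finset (Fin n)) → Prop}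
    (straight : ∀ Q, (∀ i, 1 ≤ i → i + 1 ≤ k → (Q (i + 1)).card ≤ (Q i).card) → p Q)
    (swap : ∀ Q i, 1 ≤ i → i + 1 ≤ k → p (sigmaRow i Q) → p Q) (Q : ℕ → Finset (Fin n)) :
    p Q := by
  induction hw : rowWeight k Q using Nat.strong_induction_on generalizing Q with
  | _ w ih =>
    by_cases hQ : ∀ i, 1 ≤ i → i + 1 ≤ k → (Q (i + 1)).card ≤ (Q i).card
    · exact straight Q hQ
    · push Not at hQ
      obtain ⟨i, hi, hik, hlt⟩ := hQ
      have := rowWeight_sigmaRow Q hi hik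
      exact swap Q i hi hik (ih _ (by omega) _ rfl)

end Straightening

section Shift

variable {n : ℕ} {P : ℕ → Finset (Fin n) → (Fin n → ℕ) → (Fin n → ℕ)}

theorem apply_iterate_incWord
    (hinc : ∀ j Q u, P (j + 1) Q (incWord u) = incWord (P j Q u)) (d j : ℕ) (Q : Finset (Fin n))
    (u : Fin n → ℕ) : P (j + d) Q (incWord^[d] u) = incWord^[d] (P j Q u) := by
  induction d with
  | zero => rfl
  | succ d ih =>
    rw [Function.iterate_succ_apply', ← add_assoc, hinc, ih, Function.iterate_succ_apply']

theorem applyRows_add_iterate_incWord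
    (hinc : ∀ j Q u, P (j + 1) Q (incWord u) = incWord (P j Q u)) (Q : ℕ → Finset (Fin n))
    {k m : ℕ} (hm : m ≤ k) (d : ℕ) (base : Fin n → ℕ) :
    applyRows P Q (k + d) (incWord^[d] base) m
      = incWord^[d] (applyRows P (fun i => Q (i + d)) k base m) := by
  induction m with
  | zero => rfl
  | succ m ih =>
    rw [applyRows, applyRows, ih (by omega), show k + d - m = k - m + d by omega,
      apply_iterate_incWord hinc]

end Shift

/-- suppose two families of row operators `Ψ^{(j)}_Q` and `Ω^{(j)}_Q`
define iterative projection maps (from top row `k` down to row `1`, starting from the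
base words `u_k = u_0^{(+k)}` resp. `v_k = v_0^{(+k)}`) such that
(i) the full projections agree on straight (weakly decreasing row size) multiline queues,
(ii) both full projections are invariant under every row swap `σ_i`, and
(iii) both satisfy the increment compatibility `P^{(j+1)}_Q(u^{(+1)}) = (P^{(j)}_Q(u))^{(+1)}`.
Then the full projections agree on every (possibly twisted) multiline queue, and indeed
all intermediate partial compositions agree. -/
theorem iterative_projections_equivalent (n : ℕ)
    (Ψ Ω : ℕ → Finset (Fin n) → (Fin n → ℕ) → (Fin n → ℕ))
    (u0 v0 : Fin n → ℕ)
    (hstraight : ∀ (k : ℕ) (Q : ℕ → Finset (Fin n)),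
      (∀ i, 1 ≤ i → i + 1 ≤ k → (Q (i + 1)).card ≤ (Q i).card) →
      applyRows Ψ Q k (incWord^[k] u0) k = applyRows Ω Q k (incWord^[k] v0) k)
    (hσΨ : ∀ (k : ℕ) (Q : ℕ → Finset (Fin n)) (i : ℕ), 1 ≤ i → i + 1 ≤ k →
      applyRows Ψ (sigmaRow i Q) k (incWord^[k] u0) k = applyRows Ψ Q k (incWord^[k] u0) k)
    (hσΩ : ∀ (k : ℕ) (Q : ℕ → Finset (Fin n)) (i : ℕ), 1 ≤ i → i + 1 ≤ k →
      applyRows Ω (sigmaRow i Q) k (incWord^[k] v0) k = applyRows Ω Q k (incWord^[k] v0) k)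
    (hincΨ : ∀ (j : ℕ) (Q : Finset (Fin n)) (u : Fin n → ℕ),
      Ψ (j + 1) Q (incWord u) = incWord (Ψ j Q u))
    (hincΩ : ∀ (j : ℕ) (Q : Finset (Fin n)) (u : Fin n → ℕ),
      Ω (j + 1) Q (incWord u) = incWord (Ω j Q u)) :
    ∀ (k : ℕ) (Q : ℕ → Finset (Fin n)) (j : ℕ), 1 ≤ j → j ≤ k →
      applyRows Ψ Q k (incWord^[k] u0) (k - j + 1)
        = applyRows Ω Q k (incWord^[k] v0) (k - j + 1) := by
  have full : ∀ k Q, applyRows Ψ Q k (incWord^[k] u0) k = applyRows Ω Q k (incWord^[k] v0) k :=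
    fun k => sigmaRow_induction (hstraight k) fun Q i hi hik h => by
      rwa [hσΨ k Q i hi hik, hσΩ k Q i hi hik] at h
  intro k Q j hj hjk
  obtain ⟨m, d, hk, hm⟩ : ∃ m d, k = m + d ∧ k - j + 1 = m := ⟨k - j + 1, j - 1, by omega, rfl⟩
  have hbase (w : Fin n → ℕ) : incWord^[m + d] w = incWord^[d] (incWord^[m] w) := by
    rw [add_comm, Function.iterate_add_apply]
  rw [hm, hk, hbase, hbase, applyRows_add_iterate_incWord hincΨ Q le_rfl,
    applyRows_add_iterate_incWord hincΩ Q le_rfl, full]
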